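/- Suppose additionally that u + v > 0, and let x ∈ ℝ^{S_m} be the unique vector satisfying Q x = 0 and x_{(1,0)} + x_{(1,1)} = 1. Then 0 ≤ x_{(n,r)} ≤ 1 for every (n,r) ∈ S_m. (Each entry of the normalized kernel vector of Q is a probability.) -/
import Mathlib


open Finset

/-- The state space `S_m = {(n,r) : 1 ≤ n ≤ m, 0 ≤ r ≤ n}`, realised as a subtype of
`Fin (m+1) × Fin (m+1)` (first coordinate `n`, second coordinate `r`). -/
abbrev SmIdx (m : ℕ) := {p : Fin (m + 1) × Fin (m + 1) // 1 ≤ (p.1 : ℕ) ∧ (p.2 : ℕ) ≤ (p.1 : ℕ)}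

/-- The entry of the matrix `Q` in row `(n,r)` and column `(n',r')`:
`Q_{(n,r),(n,r-1)} = (n-r+1)v`, `Q_{(n,r),(n,r+1)} = (r+1)u`,
`Q_{(n,r),(n-1,r)} = (n-1-r)n/θ`, `Q_{(n,r),(n-1,r-1)} = (r-1)n/θ`,
`Q_{(n,r),(n,r)} = -n(n-1)/θ - (n-r)v - ru`, and all other entries zero. -/
noncomputable def QEnt (θ u v : ℝ) (n r n' r' : ℕ) : ℝ :=
  if n' = n ∧ r' + 1 = r then ((n : ℝ) - (r : ℝ) + 1) * v
  else if n' = n ∧ r' = r + 1 then ((r : ℝ) + 1) * u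
  else if n' + 1 = n ∧ r' = r then ((n : ℝ) - 1 - (r : ℝ)) * (n : ℝ) / θ
  else if n' + 1 = n ∧ r' + 1 = r then ((r : ℝ) - 1) * (n : ℝ) / θ
  else if n' = n ∧ r' = r then
    -((n : ℝ) * ((n : ℝ) - 1) / θ) - ((n : ℝ) - (r : ℝ)) * v - (r : ℝ) * u
  else 0

/-- The matrix `Q`, rows and columns indexed by `S_m`. -/
noncomputable def coalQ (m : ℕ) (θ u v : ℝ) : Matrix (SmIdx m) (SmIdx m) ℝ :=
  fun p q => QEnt θ u v (p.1.1 : ℕ) (p.1.2 : ℕ) (q.1.1 : ℕ) (q.1.2 : ℕ)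

/-- The state `(1,0) ∈ S_m`. -/
def st10 (m : ℕ) (hm : 1 ≤ m) : SmIdx m :=
  ⟨(⟨1, Nat.lt_succ_of_le hm⟩, ⟨0, Nat.succ_pos m⟩), le_refl 1, Nat.zero_le 1⟩

/-- The state `(1,1) ∈ S_m`. -/
def st11 (m : ℕ) (hm : 1 ≤ m) : SmIdx m :=
  ⟨(⟨1, Nat.lt_succ_of_le hm⟩, ⟨1, Nat.lt_succ_of_le hm⟩), le_refl 1, le_refl 1⟩

noncomputable def yv (m : ℕ) (x : SmIdx m → ℝ) (n r : ℕ) : ℝ :=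
  if h : 1 ≤ n ∧ n ≤ m ∧ r ≤ n then
    x ⟨(⟨n, Nat.lt_succ_of_le h.2.1⟩, ⟨r, Nat.lt_succ_of_le (le_trans h.2.2 h.2.1)⟩), h.1, h.2.2⟩
  else 0

lemma yv_zero (m : ℕ) (x : SmIdx m → ℝ) (n r : ℕ) (h : ¬(1 ≤ n ∧ n ≤ m ∧ r ≤ n)) :
    yv m x n r = 0 := dif_neg h

lemma yv_eq (m : ℕ) (x : SmIdx m → ℝ) (p : SmIdx m) :
    x p = yv m x (p.1.1 : ℕ) (p.1.2 : ℕ) := by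
  obtain ⟨⟨⟨n, hn⟩, ⟨r, hr⟩⟩, hp⟩ := p
  have h : 1 ≤ n ∧ n ≤ m ∧ r ≤ n := ⟨hp.1, Nat.lt_succ_iff.mp hn, hp.2⟩
  rw [yv, dif_pos h]


lemma sum_pt (M a : ℕ) (ha : a < M) (f : ℕ → ℝ) :
    (∑ i ∈ Finset.range M, if i = a then f i else 0) = f a := by
  rw [Finset.sum_ite_eq' (Finset.range M) a f, if_pos (Finset.mem_range.mpr ha)]

lemma sum2_pt (M a b : ℕ) (ha : a < M) (hb : b < M)
    (P : ℕ → ℕ → Prop) [∀ i j, Decidable (P i j)]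
    (hP : ∀ i j, P i j ↔ (i = a ∧ j = b)) (f : ℕ → ℕ → ℝ) :
    (∑ i ∈ Finset.range M, ∑ j ∈ Finset.range M, if P i j then f i j else 0) = f a b := by
  have h0 : ∀ i j, (if P i j then f i j else 0) = (if i = a ∧ j = b then f i j else 0) :=
    fun i j => if_congr (hP i j) rfl rfl
  simp only [h0]
  have h1 : ∀ i, (∑ j ∈ Finset.range M, if i = a ∧ j = b then f i j else 0)
      = if i = a then f i b else 0 := by
    intro i
    by_cases hi : i = a
    · simp only [hi, true_and]
      rw [sum_pt M b hb (fun j => f a j)]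
      simp
    · simp [hi]
  rw [Finset.sum_congr rfl (fun i _ => h1 i), sum_pt M a ha]

lemma sum2_zero (M : ℕ) (P : ℕ → ℕ → Prop) [∀ i j, Decidable (P i j)]
    (h : ∀ i j, i < M → j < M → ¬ P i j) (f : ℕ → ℕ → ℝ) :
    (∑ i ∈ Finset.range M, ∑ j ∈ Finset.range M, if P i j then f i j else 0) = 0 := by
  apply Finset.sum_eq_zero
  intro i hi
  apply Finset.sum_eq_zero
  intro j hj
  rw [if_neg (h i j (Finset.mem_range.mp hi) (Finset.mem_range.mp hj))]

lemma QEnt_split (θ u v : ℝ) (n r i j : ℕ) :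
    QEnt θ u v n r i j
      = (if i = n ∧ j + 1 = r then ((n:ℝ) - (r:ℝ) + 1) * v else 0)
      + (if i = n ∧ j = r + 1 then ((r:ℝ) + 1) * u else 0)
      + (if i + 1 = n ∧ j = r then ((n:ℝ) - 1 - (r:ℝ)) * (n:ℝ) / θ else 0)
      + (if i + 1 = n ∧ j + 1 = r then ((r:ℝ) - 1) * (n:ℝ) / θ else 0)
      + (if i = n ∧ j = r then -((n:ℝ) * ((n:ℝ) - 1) / θ) - ((n:ℝ) - (r:ℝ)) * v - (r:ℝ) * u else 0) := by
  unfold QEnt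
  split_ifs <;> first | ring1 | (exfalso; omega)

lemma rowEq (m : ℕ) (θ u v : ℝ) (x : SmIdx m → ℝ)
    (hx : (coalQ m θ u v).mulVec x = 0)
    (n r : ℕ) (h1 : 1 ≤ n) (h2 : n ≤ m) (h3 : r ≤ n) :
    ((n:ℝ) * ((n:ℝ) - 1) / θ + ((n:ℝ) - (r:ℝ)) * v + (r:ℝ) * u) * yv m x n r
      = (if 1 ≤ r then ((n:ℝ) - (r:ℝ) + 1) * v * yv m x n (r-1) else 0)
        + ((r:ℝ) + 1) * u * yv m x n (r+1)
        + ((n:ℝ) - 1 - (r:ℝ)) * (n:ℝ) / θ * yv m x (n-1) r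
        + (if 1 ≤ r then ((r:ℝ) - 1) * (n:ℝ) / θ * yv m x (n-1) (r-1) else 0) := by
  classical
  have hrow : ∑ q : SmIdx m, QEnt θ u v n r (q.1.1 : ℕ) (q.1.2 : ℕ) * yv m x (q.1.1 : ℕ) (q.1.2 : ℕ) = 0 := by
    have h0 := congrFun hx (⟨(⟨n, Nat.lt_succ_of_le h2⟩, ⟨r, Nat.lt_succ_of_le (le_trans h3 h2)⟩), h1, h3⟩ : SmIdx m)
    simp only [Matrix.mulVec, dotProduct, coalQ, Pi.zero_apply] at h0
    rw [← h0]
    exact Finset.sum_congr rfl fun q _ => by rw [← yv_eq m x q]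
  set G : Fin (m+1) × Fin (m+1) → ℝ :=
    fun a => QEnt θ u v n r (a.1 : ℕ) (a.2 : ℕ) * yv m x (a.1 : ℕ) (a.2 : ℕ) with hG
  have e1 : ∑ a ∈ Finset.univ.filter
      (fun a : Fin (m+1) × Fin (m+1) => 1 ≤ (a.1:ℕ) ∧ (a.2:ℕ) ≤ (a.1:ℕ)), G a
      = ∑ q : SmIdx m, G q.1 := Finset.sum_subtype _ (fun a => by simp) G
  have e2 : ∑ a ∈ Finset.univ.filter
      (fun a : Fin (m+1) × Fin (m+1) => 1 ≤ (a.1:ℕ) ∧ (a.2:ℕ) ≤ (a.1:ℕ)), G a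
      = ∑ a : Fin (m+1) × Fin (m+1), G a := by
    apply Finset.sum_subset (Finset.filter_subset _ _)
    intro a _ ha
    have hna : ¬(1 ≤ (a.1:ℕ) ∧ (a.2:ℕ) ≤ (a.1:ℕ)) := by simpa using ha
    have hz : yv m x (a.1:ℕ) (a.2:ℕ) = 0 :=
      yv_zero _ _ _ _ (fun hc => hna ⟨hc.1, hc.2.2⟩)
    simp only [hG, hz, mul_zero]
  have e3 : ∑ a : Fin (m+1) × Fin (m+1), G a
      = ∑ i ∈ Finset.range (m+1), ∑ j ∈ Finset.range (m+1),
          QEnt θ u v n r i j * yv m x i j := by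
    rw [Fintype.sum_prod_type]
    rw [Fin.sum_univ_eq_sum_range
      (fun i => ∑ j : Fin (m+1), QEnt θ u v n r i (j:ℕ) * yv m x i (j:ℕ)) (m+1)]
    exact Finset.sum_congr rfl fun i _ =>
      Fin.sum_univ_eq_sum_range (fun j => QEnt θ u v n r i j * yv m x i j) (m+1)
  have hsum2 : ∑ i ∈ Finset.range (m+1), ∑ j ∈ Finset.range (m+1),
      QEnt θ u v n r i j * yv m x i j = 0 := by
    rw [← e3, ← e2, e1]
    exact hrow
  have expand : ∀ i j, QEnt θ u v n r i j * yv m x i j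
      = (if i = n ∧ j + 1 = r then ((n:ℝ) - (r:ℝ) + 1) * v * yv m x i j else 0)
      + (if i = n ∧ j = r + 1 then ((r:ℝ) + 1) * u * yv m x i j else 0)
      + (if i + 1 = n ∧ j = r then ((n:ℝ) - 1 - (r:ℝ)) * (n:ℝ) / θ * yv m x i j else 0)
      + (if i + 1 = n ∧ j + 1 = r then ((r:ℝ) - 1) * (n:ℝ) / θ * yv m x i j else 0)
      + (if i = n ∧ j = r then
          (-((n:ℝ) * ((n:ℝ) - 1) / θ) - ((n:ℝ) - (r:ℝ)) * v - (r:ℝ) * u) * yv m x i j else 0) := by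
    intro i j
    rw [QEnt_split]
    simp only [add_mul, ite_mul, zero_mul]
  simp only [expand, Finset.sum_add_distrib] at hsum2
  have hb1 : (∑ i ∈ Finset.range (m+1), ∑ j ∈ Finset.range (m+1),
      if i = n ∧ j + 1 = r then ((n:ℝ) - (r:ℝ) + 1) * v * yv m x i j else 0)
      = (if 1 ≤ r then ((n:ℝ) - (r:ℝ) + 1) * v * yv m x n (r-1) else 0) := by
    by_cases hr : 1 ≤ r
    · rw [if_pos hr]
      exact sum2_pt (m+1) n (r-1) (by omega) (by omega) _ (fun i j => by omega) _
    · rw [if_neg hr]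
      exact sum2_zero (m+1) _ (fun i j _ _ => by omega) _
  have hb2 : (∑ i ∈ Finset.range (m+1), ∑ j ∈ Finset.range (m+1),
      if i = n ∧ j = r + 1 then ((r:ℝ) + 1) * u * yv m x i j else 0)
      = ((r:ℝ) + 1) * u * yv m x n (r+1) := by
    by_cases hrm : r + 1 < m + 1
    · exact sum2_pt (m+1) n (r+1) (by omega) hrm _ (fun i j => by omega) _
    · have hz : yv m x n (r+1) = 0 := yv_zero _ _ _ _ (by omega)
      rw [hz, mul_zero]
      exact sum2_zero (m+1) _ (fun i j hi hj => by omega) _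
  have hb3 : (∑ i ∈ Finset.range (m+1), ∑ j ∈ Finset.range (m+1),
      if i + 1 = n ∧ j = r then ((n:ℝ) - 1 - (r:ℝ)) * (n:ℝ) / θ * yv m x i j else 0)
      = ((n:ℝ) - 1 - (r:ℝ)) * (n:ℝ) / θ * yv m x (n-1) r :=
    sum2_pt (m+1) (n-1) r (by omega) (by omega) _ (fun i j => by omega) _
  have hb4 : (∑ i ∈ Finset.range (m+1), ∑ j ∈ Finset.range (m+1),
      if i + 1 = n ∧ j + 1 = r then ((r:ℝ) - 1) * (n:ℝ) / θ * yv m x i j else 0)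
      = (if 1 ≤ r then ((r:ℝ) - 1) * (n:ℝ) / θ * yv m x (n-1) (r-1) else 0) := by
    by_cases hr : 1 ≤ r
    · rw [if_pos hr]
      exact sum2_pt (m+1) (n-1) (r-1) (by omega) (by omega) _ (fun i j => by omega) _
    · rw [if_neg hr]
      exact sum2_zero (m+1) _ (fun i j _ _ => by omega) _
  have hb5 : (∑ i ∈ Finset.range (m+1), ∑ j ∈ Finset.range (m+1),
      if i = n ∧ j = r then
        (-((n:ℝ) * ((n:ℝ) - 1) / θ) - ((n:ℝ) - (r:ℝ)) * v - (r:ℝ) * u) * yv m x i j else 0)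
      = (-((n:ℝ) * ((n:ℝ) - 1) / θ) - ((n:ℝ) - (r:ℝ)) * v - (r:ℝ) * u) * yv m x n r :=
    sum2_pt (m+1) n r (by omega) (by omega) _ (fun i j => by omega) _
  rw [hb1, hb2, hb3, hb4, hb5] at hsum2
  linear_combination -hsum2

noncomputable def thomasA (a b c : ℕ → ℝ) : ℕ → ℝ
  | 0 => a 0
  | r+1 => a (r+1) - c (r+1) * b r / thomasA a b c r

noncomputable def thomasD (a b c d : ℕ → ℝ) : ℕ → ℝ
  | 0 => d 0
  | r+1 => d (r+1) + c (r+1) * thomasD a b c d r / thomasA a b c r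

lemma thomas_nonneg (ε : ℝ) (hε : 0 < ε) (n : ℕ) (a b c d y : ℕ → ℝ)
    (hb : ∀ r, 0 ≤ b r) (hc : ∀ r, r ≤ n + 1 → 0 ≤ c r) (hd : ∀ r, r ≤ n → 0 ≤ d r)
    (ha0 : a 0 = ε + c 1) (haS : ∀ r, r + 1 ≤ n → a (r+1) = ε + c (r+2) + b r)
    (hF0 : a 0 * y 0 = d 0 + b 0 * y 1)
    (hFS : ∀ r, r + 1 ≤ n → a (r+1) * y (r+1) = c (r+1) * y r + d (r+1) + b (r+1) * y (r+1+1))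
    (htop : y (n+1) = 0) :
    ∀ r, r ≤ n → 0 ≤ y r := by
  have hA : ∀ r, r ≤ n → ε + c (r+1) ≤ thomasA a b c r := by
    intro r
    induction r with
    | zero =>
      intro _
      simp only [thomasA]
      rw [ha0]
    | succ k ih =>
      intro hk
      have ihk := ih (by omega)
      have hApos : 0 < thomasA a b c k :=
        lt_of_lt_of_le (by have := hc (k+1) (by omega); linarith) ihk
      have hdiv : c (k+1) * b k / thomasA a b c k ≤ b k := by
        rw [div_le_iff₀ hApos, mul_comm (c (k+1)) (b k)]
        exact mul_le_mul_of_nonneg_left (by linarith) (hb k)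
      simp only [thomasA]
      rw [haS k hk]
      linarith
  have hApos : ∀ r, r ≤ n → 0 < thomasA a b c r := fun r hr =>
    lt_of_lt_of_le (by have := hc (r+1) (by omega); linarith) (hA r hr)
  have hD : ∀ r, r ≤ n → 0 ≤ thomasD a b c d r := by
    intro r
    induction r with
    | zero =>
      intro _
      simp only [thomasD]
      exact hd 0 (by omega)
    | succ k ih =>
      intro hk
      have ihk := ih (by omega)
      simp only [thomasD]
      have h2 : 0 ≤ c (k+1) * thomasD a b c d k / thomasA a b c k :=
        div_nonneg (mul_nonneg (hc (k+1) (by omega)) ihk) (le_of_lt (hApos k (by omega)))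
      have h3 := hd (k+1) hk
      linarith
  have hF : ∀ r, r ≤ n → thomasA a b c r * y r = thomasD a b c d r + b r * y (r+1) := by
    intro r
    induction r with
    | zero =>
      intro _
      simp only [thomasA, thomasD]
      exact hF0
    | succ k ih =>
      intro hk
      have hfk := ih (by omega)
      have hAk := hApos k (by omega)
      have hyk : y k = (thomasD a b c d k + b k * y (k+1)) / thomasA a b c k := by
        rw [eq_div_iff hAk.ne']
        linear_combination hfk
      have h2 := hFS k hk
      rw [hyk] at h2
      simp only [thomasA, thomasD]
      linear_combination h2
  have hback : ∀ k, k ≤ n → 0 ≤ y (n - k) := by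
    intro k
    induction k with
    | zero =>
      intro _
      have hfn := hF n le_rfl
      rw [htop, mul_zero, add_zero] at hfn
      have h1 : y n = thomasD a b c d n / thomasA a b c n := by
        rw [eq_div_iff (hApos n le_rfl).ne']
        linear_combination hfn
      rw [Nat.sub_zero, h1]
      exact div_nonneg (hD n le_rfl) (le_of_lt (hApos n le_rfl))
    | succ k ih =>
      intro hk
      have ihk := ih (by omega)
      have hr : n - (k+1) ≤ n := by omega
      have hfr := hF (n - (k+1)) hr
      have hr1 : n - (k+1) + 1 = n - k := by omega
      rw [hr1] at hfr
      have hAr := hApos (n - (k+1)) hr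
      have h1 : y (n - (k+1)) = (thomasD a b c d (n-(k+1)) + b (n-(k+1)) * y (n - k))
          / thomasA a b c (n-(k+1)) := by
        rw [eq_div_iff hAr.ne']
        linear_combination hfr
      rw [h1]
      exact div_nonneg (add_nonneg (hD _ hr) (mul_nonneg (hb _) ihk)) (le_of_lt hAr)
  intro r hr
  have h0 := hback (n - r) (by omega)
  rwa [Nat.sub_sub_self hr] at h0

lemma level (m : ℕ) (θ u v : ℝ) (hθ : 0 < θ) (hu : 0 ≤ u) (hv : 0 ≤ v) (huv : 0 < u + v)
    (hm : 1 ≤ m) (x : SmIdx m → ℝ) (hx : (coalQ m θ u v).mulVec x = 0)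
    (hnorm : x (st10 m hm) + x (st11 m hm) = 1) :
    ∀ n, 1 ≤ n → n ≤ m →
      (∀ r, 0 ≤ yv m x n r) ∧ (∑ r ∈ Finset.range (n+1), yv m x n r = 1) := by
  have hnorm' : yv m x 1 0 + yv m x 1 1 = 1 := by
    have h0 : yv m x 1 0 = x (st10 m hm) := by
      rw [yv, dif_pos (show 1 ≤ 1 ∧ 1 ≤ m ∧ 0 ≤ 1 from ⟨le_rfl, hm, by omega⟩)]
      rfl
    have h1 : yv m x 1 1 = x (st11 m hm) := by
      rw [yv, dif_pos (show 1 ≤ 1 ∧ 1 ≤ m ∧ 1 ≤ 1 from ⟨le_rfl, hm, le_rfl⟩)]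
      rfl
    rw [h0, h1]
    exact hnorm
  intro n hn
  induction n, hn using Nat.le_induction with
  | base =>
    intro h1m
    have e0 := rowEq m θ u v x hx 1 0 le_rfl h1m (by omega)
    rw [if_neg (by omega : ¬ (1:ℕ) ≤ 0), if_neg (by omega : ¬ (1:ℕ) ≤ 0)] at e0
    rw [show yv m x (1-1) 0 = 0 from yv_zero _ _ _ _ (by omega), mul_zero] at e0
    have h10 : (u + v) * yv m x 1 0 = u := by linear_combination e0 + u * hnorm'
    have h11 : (u + v) * yv m x 1 1 = v := by linear_combination -e0 + v * hnorm'
    have hy10 : yv m x 1 0 = u / (u + v) := by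
      rw [eq_div_iff (ne_of_gt huv)]
      linear_combination h10
    have hy11 : yv m x 1 1 = v / (u + v) := by
      rw [eq_div_iff (ne_of_gt huv)]
      linear_combination h11
    constructor
    · intro r
      rcases r with _ | (_ | r)
      · rw [hy10]
        exact div_nonneg hu (le_of_lt huv)
      · rw [hy11]
        exact div_nonneg hv (le_of_lt huv)
      · exact le_of_eq (yv_zero _ _ _ _ (by omega)).symm
    · rw [Finset.sum_range_succ, Finset.sum_range_succ, Finset.sum_range_zero, zero_add]
      exact hnorm'
  | succ n hn ih =>
    intro hNm
    obtain ⟨ihpos, ihsum⟩ := ih (by omega)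
    have h2N : (2:ℝ) ≤ ((n+1:ℕ):ℝ) := by exact_mod_cast (by omega : 2 ≤ n+1)
    have hε : 0 < ((n+1:ℕ):ℝ) * (((n+1:ℕ):ℝ) - 1) / θ := by
      apply div_pos _ hθ
      nlinarith
    -- nonneg via Thomas elimination
    have hb' : ∀ r : ℕ, 0 ≤ ((r:ℝ)+1)*u := fun r => mul_nonneg (by positivity) hu
    have hc' : ∀ r : ℕ, r ≤ (n+1) + 1 → 0 ≤ (((n+1:ℕ):ℝ) - (r:ℝ) + 1)*v := by
      intro r hr
      apply mul_nonneg _ hv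
      have h1 : (r:ℝ) ≤ ((n+2:ℕ):ℝ) := by exact_mod_cast (by omega : r ≤ n+2)
      push_cast at h1 ⊢
      linarith
    have hd' : ∀ r : ℕ, r ≤ n+1 →
        0 ≤ (((n+1:ℕ):ℝ) - 1 - (r:ℝ)) * ((n+1:ℕ):ℝ) / θ * yv m x n r
          + (if 1 ≤ r then ((r:ℝ)-1) * ((n+1:ℕ):ℝ) / θ * yv m x n (r-1) else 0) := by
      intro r hr
      have t2 : 0 ≤ (if 1 ≤ r then ((r:ℝ)-1) * ((n+1:ℕ):ℝ) / θ * yv m x n (r-1) else 0) := by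
        split_ifs with h1r
        · apply mul_nonneg (div_nonneg (mul_nonneg ?_ (by positivity)) hθ.le) (ihpos (r-1))
          have : (1:ℝ) ≤ (r:ℝ) := by exact_mod_cast h1r
          linarith
        · exact le_rfl
      have t1 : 0 ≤ (((n+1:ℕ):ℝ) - 1 - (r:ℝ)) * ((n+1:ℕ):ℝ) / θ * yv m x n r := by
        by_cases hrn : r ≤ n
        · apply mul_nonneg (div_nonneg (mul_nonneg ?_ (by positivity)) hθ.le) (ihpos r)
          have h1 : (r:ℝ) ≤ (n:ℝ) := by exact_mod_cast hrn
          push_cast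
          linarith
        · rw [yv_zero m x n r (by omega), mul_zero]
      linarith
    have ha0' : ((n+1:ℕ):ℝ) * (((n+1:ℕ):ℝ) - 1) / θ + (((n+1:ℕ):ℝ) - ((0:ℕ):ℝ))*v + ((0:ℕ):ℝ)*u
        = ((n+1:ℕ):ℝ) * (((n+1:ℕ):ℝ) - 1) / θ + (((n+1:ℕ):ℝ) - ((1:ℕ):ℝ) + 1)*v := by
      push_cast
      ring
    have haS' : ∀ r : ℕ, r + 1 ≤ n+1 →
        ((n+1:ℕ):ℝ) * (((n+1:ℕ):ℝ) - 1) / θ + (((n+1:ℕ):ℝ) - ((r+1:ℕ):ℝ))*v + ((r+1:ℕ):ℝ)*u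
        = ((n+1:ℕ):ℝ) * (((n+1:ℕ):ℝ) - 1) / θ + (((n+1:ℕ):ℝ) - ((r+2:ℕ):ℝ) + 1)*v
          + ((r:ℝ)+1)*u := by
      intro r _
      push_cast
      ring
    have hF0' : (((n+1:ℕ):ℝ) * (((n+1:ℕ):ℝ) - 1) / θ + (((n+1:ℕ):ℝ) - ((0:ℕ):ℝ))*v + ((0:ℕ):ℝ)*u)
          * yv m x (n+1) 0
        = ((((n+1:ℕ):ℝ) - 1 - ((0:ℕ):ℝ)) * ((n+1:ℕ):ℝ) / θ * yv m x n 0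
            + (if 1 ≤ (0:ℕ) then (((0:ℕ):ℝ)-1) * ((n+1:ℕ):ℝ) / θ * yv m x n (0-1) else 0))
          + (((0:ℕ):ℝ)+1)*u * yv m x (n+1) 1 := by
      have e := rowEq m θ u v x hx (n+1) 0 (by omega) hNm (by omega)
      simp only [Nat.add_sub_cancel, zero_add] at e
      rw [if_neg (by omega : ¬ (1:ℕ) ≤ 0), if_neg (by omega : ¬ (1:ℕ) ≤ 0)] at e
      rw [if_neg (by omega : ¬ (1:ℕ) ≤ 0)]
      linear_combination e
    have hFS' : ∀ r : ℕ, r + 1 ≤ n+1 →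
        (((n+1:ℕ):ℝ) * (((n+1:ℕ):ℝ) - 1) / θ + (((n+1:ℕ):ℝ) - ((r+1:ℕ):ℝ))*v + ((r+1:ℕ):ℝ)*u)
          * yv m x (n+1) (r+1)
        = (((n+1:ℕ):ℝ) - ((r+1:ℕ):ℝ) + 1)*v * yv m x (n+1) r
          + ((((n+1:ℕ):ℝ) - 1 - ((r+1:ℕ):ℝ)) * ((n+1:ℕ):ℝ) / θ * yv m x n (r+1)
            + (if 1 ≤ r+1 then (((r+1:ℕ):ℝ)-1) * ((n+1:ℕ):ℝ) / θ * yv m x n (r+1-1) else 0))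
          + (((r+1:ℕ):ℝ)+1)*u * yv m x (n+1) (r+1+1) := by
      intro r hr
      have e := rowEq m θ u v x hx (n+1) (r+1) (by omega) hNm (by omega)
      simp only [Nat.add_sub_cancel] at e
      rw [if_pos (by omega : 1 ≤ r+1), if_pos (by omega : 1 ≤ r+1)] at e
      rw [if_pos (by omega : 1 ≤ r+1)]
      simp only [Nat.add_sub_cancel]
      linear_combination e
    have htop' : yv m x (n+1) (n+1+1) = 0 := yv_zero _ _ _ _ (by omega)
    have Hnn := thomas_nonneg (((n+1:ℕ):ℝ) * (((n+1:ℕ):ℝ) - 1) / θ) hε (n+1)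
      (fun r => ((n+1:ℕ):ℝ) * (((n+1:ℕ):ℝ) - 1) / θ + (((n+1:ℕ):ℝ) - (r:ℝ))*v + (r:ℝ)*u)
      (fun r => ((r:ℝ)+1)*u)
      (fun r => (((n+1:ℕ):ℝ) - (r:ℝ) + 1)*v)
      (fun r => (((n+1:ℕ):ℝ) - 1 - (r:ℝ)) * ((n+1:ℕ):ℝ) / θ * yv m x n r
        + (if 1 ≤ r then ((r:ℝ)-1) * ((n+1:ℕ):ℝ) / θ * yv m x n (r-1) else 0))
      (fun r => yv m x (n+1) r)
      hb' hc' hd' ha0' haS' hF0' hFS' htop'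
    have hpos : ∀ r, 0 ≤ yv m x (n+1) r := by
      intro r
      by_cases hr : r ≤ n+1
      · exact Hnn r hr
      · rw [yv_zero _ _ _ _ (by omega)]
    refine ⟨hpos, ?_⟩
    -- the sum identity
    have hstep : ∀ r ∈ Finset.range (n+2),
        ((n+1:ℕ):ℝ) * (((n+1:ℕ):ℝ) - 1) / θ * yv m x (n+1) r
          = ((((if 1 ≤ r then (((n+1:ℕ):ℝ) - (r:ℝ) + 1)*v * yv m x (n+1) (r-1) else 0)
            + ((r:ℝ)+1)*u * yv m x (n+1) (r+1))
            + (((n+1:ℕ):ℝ) - 1 - (r:ℝ)) * ((n+1:ℕ):ℝ) / θ * yv m x n r)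
            + (if 1 ≤ r then ((r:ℝ)-1) * ((n+1:ℕ):ℝ) / θ * yv m x n (r-1) else 0))
            - ((((n+1:ℕ):ℝ) - (r:ℝ))*v * yv m x (n+1) r + (r:ℝ)*u * yv m x (n+1) r) := by
      intro r hr
      have hr' : r ≤ n+1 := by
        have := Finset.mem_range.mp hr
        omega
      have e := rowEq m θ u v x hx (n+1) r (by omega) hNm hr'
      simp only [Nat.add_sub_cancel] at e
      linear_combination e
    have hsums := Finset.sum_congr rfl hstep
    rw [← Finset.mul_sum] at hsums
    simp only [Finset.sum_sub_distrib, Finset.sum_add_distrib] at hsums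
    have hP1 : (∑ r ∈ Finset.range (n+2),
        if 1 ≤ r then (((n+1:ℕ):ℝ) - (r:ℝ) + 1)*v * yv m x (n+1) (r-1) else 0)
        = ∑ r ∈ Finset.range (n+2), (((n+1:ℕ):ℝ) - (r:ℝ))*v * yv m x (n+1) r := by
      rw [Finset.sum_range_succ'
          (fun r : ℕ => if 1 ≤ r then (((n+1:ℕ):ℝ) - (r:ℝ) + 1)*v * yv m x (n+1) (r-1) else 0) (n+1),
        Finset.sum_range_succ
          (fun r : ℕ => (((n+1:ℕ):ℝ) - (r:ℝ))*v * yv m x (n+1) r) (n+1)]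
      rw [if_neg (by omega : ¬ (1:ℕ) ≤ 0), add_zero]
      have hc : ∀ i ∈ Finset.range (n+1),
          (if 1 ≤ i+1 then (((n+1:ℕ):ℝ) - ((i+1:ℕ):ℝ) + 1)*v * yv m x (n+1) (i+1-1) else 0)
          = (((n+1:ℕ):ℝ) - (i:ℝ))*v * yv m x (n+1) i := by
        intro i _
        rw [if_pos (by omega : 1 ≤ i+1)]
        simp only [Nat.add_sub_cancel]
        push_cast
        ring
      rw [Finset.sum_congr rfl hc]
      rw [show (((n+1:ℕ):ℝ) - ((n+1:ℕ):ℝ))*v * yv m x (n+1) (n+1) = 0 by ring, add_zero]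
    have hP2 : (∑ r ∈ Finset.range (n+2), ((r:ℝ)+1)*u * yv m x (n+1) (r+1))
        = ∑ r ∈ Finset.range (n+2), (r:ℝ)*u * yv m x (n+1) r := by
      have e1 := Finset.sum_range_succ' (fun s : ℕ => (s:ℝ)*u * yv m x (n+1) s) (n+2)
      have e2 := Finset.sum_range_succ (fun s : ℕ => (s:ℝ)*u * yv m x (n+1) s) (n+2)
      rw [show yv m x (n+1) (n+2) = 0 from yv_zero _ _ _ _ (by omega), mul_zero, add_zero] at e2
      have hc : (∑ r ∈ Finset.range (n+2), ((r:ℝ)+1)*u * yv m x (n+1) (r+1))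
          = ∑ i ∈ Finset.range (n+2), ((i+1:ℕ):ℝ)*u * yv m x (n+1) (i+1) :=
        Finset.sum_congr rfl fun i _ => by push_cast; ring
      rw [hc]
      have h00 : ((0:ℕ):ℝ)*u * yv m x (n+1) 0 = 0 := by norm_num
      linarith [e1, e2, h00]
    have hP3 : (∑ r ∈ Finset.range (n+2),
        (((n+1:ℕ):ℝ) - 1 - (r:ℝ)) * ((n+1:ℕ):ℝ) / θ * yv m x n r)
        = ∑ i ∈ Finset.range (n+1), (((n+1:ℕ):ℝ) - 1 - (i:ℝ)) * ((n+1:ℕ):ℝ) / θ * yv m x n i := by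
      rw [Finset.sum_range_succ]
      rw [show yv m x n (n+1) = 0 from yv_zero _ _ _ _ (by omega), mul_zero, add_zero]
    have hP4 : (∑ r ∈ Finset.range (n+2),
        if 1 ≤ r then ((r:ℝ)-1) * ((n+1:ℕ):ℝ) / θ * yv m x n (r-1) else 0)
        = ∑ i ∈ Finset.range (n+1), (((i+1:ℕ):ℝ)-1) * ((n+1:ℕ):ℝ) / θ * yv m x n i := by
      rw [Finset.sum_range_succ'
          (fun r : ℕ => if 1 ≤ r then ((r:ℝ)-1) * ((n+1:ℕ):ℝ) / θ * yv m x n (r-1) else 0) (n+1)]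
      rw [if_neg (by omega : ¬ (1:ℕ) ≤ 0), add_zero]
      refine Finset.sum_congr rfl fun i _ => ?_
      rw [if_pos (by omega : 1 ≤ i+1)]
      simp only [Nat.add_sub_cancel]
    have hP34 : (∑ i ∈ Finset.range (n+1),
        (((n+1:ℕ):ℝ) - 1 - (i:ℝ)) * ((n+1:ℕ):ℝ) / θ * yv m x n i)
        + (∑ i ∈ Finset.range (n+1), (((i+1:ℕ):ℝ)-1) * ((n+1:ℕ):ℝ) / θ * yv m x n i)
        = ((n+1:ℕ):ℝ) * (((n+1:ℕ):ℝ) - 1) / θ := by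
      rw [← Finset.sum_add_distrib]
      have hc : ∀ i ∈ Finset.range (n+1),
          (((n+1:ℕ):ℝ) - 1 - (i:ℝ)) * ((n+1:ℕ):ℝ) / θ * yv m x n i
            + (((i+1:ℕ):ℝ)-1) * ((n+1:ℕ):ℝ) / θ * yv m x n i
          = ((n+1:ℕ):ℝ) * (((n+1:ℕ):ℝ) - 1) / θ * yv m x n i := by
        intro i _
        push_cast
        ring
      rw [Finset.sum_congr rfl hc, ← Finset.mul_sum, ihsum, mul_one]
    rw [hP1, hP2] at hsums
    have hfin : ((n+1:ℕ):ℝ) * (((n+1:ℕ):ℝ) - 1) / θ * (∑ r ∈ Finset.range (n+2), yv m x (n+1) r)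
        = ((n+1:ℕ):ℝ) * (((n+1:ℕ):ℝ) - 1) / θ * 1 := by
      rw [mul_one]
      linarith [hsums, hP3, hP4, hP34]
    exact mul_left_cancel₀ (ne_of_gt hε) hfin

/-- If `u + v > 0` and `x ∈ ℝ^{S_m}` is the (unique) vector satisfying `Q x = 0` and
`x_{(1,0)} + x_{(1,1)} = 1`, then `0 ≤ x_{(n,r)} ≤ 1` for every `(n,r) ∈ S_m`. -/
theorem stmt9 (m : ℕ) (hm : 1 ≤ m) (θ u v : ℝ) (hθ : 0 < θ) (hu : 0 ≤ u) (hv : 0 ≤ v)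
    (huv : 0 < u + v)
    (x : SmIdx m → ℝ) (hx : (coalQ m θ u v).mulVec x = 0)
    (hnorm : x (st10 m hm) + x (st11 m hm) = 1)
    (p : SmIdx m) :
    0 ≤ x p ∧ x p ≤ 1 := by
  obtain ⟨hpos, hsum⟩ := level m θ u v hθ hu hv huv hm x hx hnorm (p.1.1 : ℕ) p.2.1
    (Nat.lt_succ_iff.mp p.1.1.isLt)
  have hxp : x p = yv m x (p.1.1 : ℕ) (p.1.2 : ℕ) := yv_eq m x p
  constructor
  · rw [hxp]
    exact hpos _
  · rw [hxp]
    calc yv m x (p.1.1 : ℕ) (p.1.2 : ℕ)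
        ≤ ∑ r ∈ Finset.range ((p.1.1 : ℕ) + 1), yv m x (p.1.1 : ℕ) r :=
          Finset.single_le_sum (fun i _ => hpos i)
            (Finset.mem_range.mpr (by have := p.2.2; omega))
      _ = 1 := hsum
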